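/- Let V = V₁:…:V₈ be an interleaved double chain in the free group 𝔉 generated by an alphabet A (each V_i a positive word, i.e. a product of generators) whose type (b₁,b₂,b₃,b₄) with b_i = |V_i| = |V_{i+4}| satisfies b₁ ≤ b₂ + b₄. Then the free-group element Z₁ = V₄⁻¹ · neg(V₁) · V₆⁻¹ is again a positive word, where neg denotes the group inverse in 𝔉 and W⁻¹ denotes letterwise reversal of a word. -/

import Mathlib

/-- Letterwise reversal of a word over an alphabet with reversal `inv`. -/
def wrev {A : Type*} (inv : A → A) (W : List A) : List A := (W.map inv).reverse

/-- An interleaved double chain (indices mod 8). -/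
def IDC {A : Type*} (inv : A → A) (U : ZMod 8 → List A) : Prop :=
  ∀ i : ZMod 8, U i ++ U (i + 1) = wrev inv (U (i + 4) ++ U (i + 5))

/-- Embedding of (positive) words into the free group on the alphabet. -/
def toF {A : Type*} (W : List A) : FreeGroup A := (W.map FreeGroup.of).prod

/-!
From the relation `V₁V₂ = V₆⁻¹V₅⁻¹`, one of `V₁`, `V₆⁻¹` is a prefix of the other. If `V₁` is
the shorter one, `neg(V₁) · V₆⁻¹` is already positive. Otherwise `V₁ = V₆⁻¹ S`, and `S` is a
suffix of `V₀V₁ = V₅⁻¹V₄⁻¹` of length `b₁ - b₂ ≤ b₄`, hence a suffix of `V₄⁻¹`, which then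
absorbs `neg(S)`. The length count uses `|V_{i+4}| = |V_i|`: the chain relations make the
differences `d_i = b_i - b_{i+4}` alternate in sign, so `d_i = d_{i+4} = -d_i`.
-/

section Words

variable {A : Type*}

@[simp]
lemma toF_append (u v : List A) : toF (u ++ v) = toF u * toF v := by
  simp [toF]

lemma exists_toF_eq_mul_inv_mul {a b c d e f : List A} (h₁ : a ++ b = c ++ d)
    (h₀ : e ++ a = d ++ f) (hd : d.length = a.length) (hlen : a.length ≤ b.length + f.length) :
    ∃ Z : List A, toF f * (toF a)⁻¹ * toF c = toF Z := by
  rcases List.append_eq_append_iff.mp h₁ with ⟨s, rfl, -⟩ | ⟨s, rfl, rfl⟩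
  · exact ⟨f ++ s, by simp [mul_assoc]⟩
  · have hs : s <:+ f := by
      refine List.suffix_of_suffix_length_le (l₃ := s ++ b ++ f) ?_ (List.suffix_append _ f) ?_
      · rw [← h₀]
        exact ⟨e ++ c, by simp⟩
      · simp only [List.length_append] at hd hlen
        omega
    obtain ⟨t, rfl⟩ := hs
    exact ⟨t, by simp [mul_assoc]⟩

variable (inv : A → A)

@[simp]
lemma wrev_append (u v : List A) : wrev inv (u ++ v) = wrev inv v ++ wrev inv u := by
  simp [wrev]

@[simp]
lemma length_wrev (u : List A) : (wrev inv u).length = u.length := by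
  simp [wrev]

end Words

lemma apply_add_four_eq_of_adjacent_sums_eq {f : ZMod 8 → ℕ}
    (hf : ∀ i, f i + f (i + 1) = f (i + 4) + f (i + 5)) (i : ZMod 8) : f (i + 4) = f i := by
  have h₁ := hf (i + 1)
  have h₂ := hf (i + 2)
  have h₃ := hf (i + 3)
  simp only [add_assoc] at h₁ h₂ h₃
  reduce_mod_char at h₁ h₂ h₃
  have h₀ := hf i
  omega

namespace IDC

variable {A : Type*} {inv : A → A} {V : ZMod 8 → List A}

lemma append_eq (hV : IDC inv V) (i : ZMod 8) :
    V i ++ V (i + 1) = wrev inv (V (i + 5)) ++ wrev inv (V (i + 4)) := by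
  rw [hV i, wrev_append]

lemma length_add_four (hV : IDC inv V) (i : ZMod 8) : (V (i + 4)).length = (V i).length :=
  apply_add_four_eq_of_adjacent_sums_eq (f := fun j => (V j).length) (fun j => by
    simpa [add_comm] using congrArg List.length (hV j)) i

end IDC

theorem stmt4_general {A : Type*} (inv : A → A)
    (V : ZMod 8 → List A) (hV : IDC inv V)
    (hlen : (V 1).length ≤ (V 2).length + (V 4).length) :
    ∃ Z : List A,
      toF (wrev inv (V 4)) * (toF (V 1))⁻¹ * toF (wrev inv (V 6)) = toF Z := by
  have h₀ : V 0 ++ V 1 = wrev inv (V 5) ++ wrev inv (V 4) := by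
    simpa using hV.append_eq 0
  have h₁ : V 1 ++ V 2 = wrev inv (V 6) ++ wrev inv (V 5) := hV.append_eq 1
  have h₅ : (V 5).length = (V 1).length := hV.length_add_four 1
  exact exists_toF_eq_mul_inv_mul h₁ h₀ (by rw [length_wrev, h₅])
    (by rwa [length_wrev])

theorem stmt4 {A : Type*} (inv : A → A) (hinv : Function.Involutive inv)
    (V : ZMod 8 → List A) (hV : IDC inv V)
    (hlen : (V 1).length ≤ (V 2).length + (V 4).length) :
    ∃ Z : List A,
      toF (wrev inv (V 4)) * (toF (V 1))⁻¹ * toF (wrev inv (V 6)) = toF Z :=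
  stmt4_general inv V hV hlen
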